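/- Let E_Z > 0 and let l be an integer with 2^l ≤ E_Z. Then the binary entropy of p̃_l = 1/(1 + e^{2^l/E_Z}) satisfies H(p̃_l) ≥ 1 - log₂(e)·2^l/E_Z (equivalently, H(p̃_l) ≥ 1 - log₂(e)·2^{l-η} where η = log₂(E_Z)). -/

import Mathlib

/-! In nats, the entropy of the logistic probability `p = 1/(1 + eˣ)` is
`log (1 + eˣ) - x eˣ/(1 + eˣ)`. For `x ≥ 0` the first term is at least `log 2` and the
second at most `x`, so the entropy is at least `log 2 - x`; dividing by `log 2` converts
nats to bits, and `x = 2^l / E_Z`. -/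

noncomputable def binEnt (p : ℝ) : ℝ :=
  -(p * Real.logb 2 p) - (1 - p) * Real.logb 2 (1 - p)

open Real

lemma binEnt_eq_binEntropy_div_log_two (p : ℝ) : binEnt p = binEntropy p / log 2 := by
  simp only [binEnt, binEntropy, logb, log_inv]
  ring

lemma binEntropy_one_div_one_add_exp (x : ℝ) :
    binEntropy (1 / (1 + exp x)) = log (1 + exp x) - x * exp x / (1 + exp x) := by
  have hpos : 0 < 1 + exp x := by positivity
  have hcompl : 1 - 1 / (1 + exp x) = exp x / (1 + exp x) := by field_simp; ring
  rw [binEntropy, hcompl, one_div, inv_inv, inv_div,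
    log_div hpos.ne' (exp_pos x).ne', log_exp]
  field_simp
  ring

lemma log_two_sub_le_binEntropy_one_div_one_add_exp {x : ℝ} (hx : 0 ≤ x) :
    log 2 - x ≤ binEntropy (1 / (1 + exp x)) := by
  have hexp : 1 ≤ exp x := one_le_exp hx
  have hlog : log 2 ≤ log (1 + exp x) := log_le_log two_pos (by linarith)
  have hfrac : x * exp x / (1 + exp x) ≤ x := by
    rw [div_le_iff₀ (by positivity)]
    nlinarith
  rw [binEntropy_one_div_one_add_exp]
  linarith

theorem binEnt_noise_lower_bound_general (EZ : ℝ) (hEZ : 0 < EZ) (l : ℤ) :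
    1 - Real.logb 2 (Real.exp 1) * (2 : ℝ) ^ l / EZ ≤
      binEnt (1 / (1 + Real.exp (2 ^ l / EZ))) := by
  have hx : 0 ≤ (2 : ℝ) ^ l / EZ := by positivity
  have hlog2 : 0 < log 2 := log_pos one_lt_two
  have hlhs : 1 - logb 2 (exp 1) * (2 : ℝ) ^ l / EZ = (log 2 - 2 ^ l / EZ) / log 2 := by
    rw [logb, log_exp]
    field_simp
  rw [hlhs, binEnt_eq_binEntropy_div_log_two]
  exact div_le_div_of_nonneg_right (log_two_sub_le_binEntropy_one_div_one_add_exp hx) hlog2.le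

/-- Lower bound on the entropy of a low-level binary digit of exponential noise with mean
`E_Z`: if `2^l ≤ E_Z`, then `H(1/(1 + exp (2^l / E_Z))) ≥ 1 - log₂(e) 2^l / E_Z`. -/
theorem binEnt_noise_lower_bound (EZ : ℝ) (hEZ : 0 < EZ) (l : ℤ) (hl : (2 : ℝ) ^ l ≤ EZ) :
    1 - Real.logb 2 (Real.exp 1) * (2 : ℝ) ^ l / EZ ≤
      binEnt (1 / (1 + Real.exp (2 ^ l / EZ))) :=
  binEnt_noise_lower_bound_general EZ hEZ l
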